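/- Let H = ℓ²(ℤ) ⊗ ℂ^{2d} with cells H_x = span{|x↑r⟩, |x↓r⟩ : r = 1,…,d}, let S = S_↓S_↑ be the conditional shift (S|x↑r⟩ = |x+1↑r⟩, S|x↓r⟩ = |x−1↓r⟩), and let C = ⊕_{x∈ℤ} C_x be any unitary coin operator acting cell-wise (each C_x a 2d×2d unitary on H_x). Then for every x ∈ ℤ, the Schur function f of the cell H_x with respect to the coined walk W = SC is an odd function: f(−z) = −f(z) for all z in the open unit disk; equivalently, all even-order coefficients P_x (W* P_x⊥)ⁿ W* P_x (n even) in its power expansion vanish. -/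

import Mathlib

open Complex Filter Set Metric Matrix

variable {H : Type*} [NormedAddCommGroup H] [InnerProductSpace ℂ H] [CompleteSpace H] {d : ℕ}

/-- The cell `H_x = span {|x↑r⟩, |x↓r⟩ : r}` of the lattice Hilbert space
`ℓ²(ℤ) ⊗ ℂ^{2d}` with orthonormal basis `e`, where `true = ↑` and `false = ↓`. -/
def cell (e : ℤ × Bool × Fin d → H) (x : ℤ) : Submodule ℂ H :=
  Submodule.span ℂ (e '' {p : ℤ × Bool × Fin d | p.1 = x})

/-- The shifted cell `H̃_x = span {|x-1,↓,r⟩, |x,↑,r⟩ : r}`. -/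
def tcell (e : ℤ × Bool × Fin d → H) (x : ℤ) : Submodule ℂ H :=
  Submodule.span ℂ (e '' {p : ℤ × Bool × Fin d |
    (p.1 = x - 1 ∧ p.2.1 = false) ∨ (p.1 = x ∧ p.2.1 = true)})

/-- The Schur function of the range of the orthogonal projection `P` with respect to `W`,
realized as the compression `P (W - z (1-P))⁻¹ P` on `H`. -/
noncomputable def schurP (W P : H →L[ℂ] H) (z : ℂ) : H →L[ℂ] H :=
  P ∘L Ring.inverse (W - z • (1 - P)) ∘L P

private lemma ring_inverse_neg' {R : Type*} [Ring R] (a : R) :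
    Ring.inverse (-a) = -Ring.inverse a := by
  by_cases h : IsUnit a
  · obtain ⟨u, rfl⟩ := h
    have hinv : (-u : Rˣ)⁻¹ = -(u⁻¹) := by
      apply inv_eq_of_mul_eq_one_right
      ext
      simp [neg_mul_neg]
    rw [← Units.val_neg, Ring.inverse_unit, Ring.inverse_unit, hinv, Units.val_neg]
  · have h2 : ¬ IsUnit (-a) := fun hu => h (by simpa using hu.neg)
    rw [Ring.inverse_non_unit _ h, Ring.inverse_non_unit _ h2, neg_zero]

private lemma ring_inverse_conj {R : Type*} [Ring R] (γ a : R) (hγ : γ * γ = 1) :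
    Ring.inverse (γ * a * γ) = γ * Ring.inverse a * γ := by
  by_cases h : IsUnit a
  · obtain ⟨u, rfl⟩ := h
    have h1 : (γ * (u : R) * γ) * (γ * ((u⁻¹ : Rˣ) : R) * γ) = 1 := by
      simp only [mul_assoc]
      rw [show γ * (γ * (((u⁻¹ : Rˣ) : R) * γ)) = (γ * γ) * (((u⁻¹ : Rˣ) : R) * γ) from
        (mul_assoc _ _ _).symm, hγ, one_mul,
        show (u : R) * (((u⁻¹ : Rˣ) : R) * γ) = ((u : R) * ((u⁻¹ : Rˣ) : R)) * γ from
        (mul_assoc _ _ _).symm, u.mul_inv, one_mul, hγ]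
    have h2 : (γ * ((u⁻¹ : Rˣ) : R) * γ) * (γ * (u : R) * γ) = 1 := by
      simp only [mul_assoc]
      rw [show γ * (γ * ((u : R) * γ)) = (γ * γ) * ((u : R) * γ) from
        (mul_assoc _ _ _).symm, hγ, one_mul,
        show ((u⁻¹ : Rˣ) : R) * ((u : R) * γ) = (((u⁻¹ : Rˣ) : R) * (u : R)) * γ from
        (mul_assoc _ _ _).symm, u.inv_mul, one_mul, hγ]
    let v : Rˣ := ⟨γ * (u : R) * γ, γ * ((u⁻¹ : Rˣ) : R) * γ, h1, h2⟩
    rw [show γ * (u : R) * γ = (v : R) from rfl, Ring.inverse_unit, Ring.inverse_unit]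
    rfl
  · have hγu : IsUnit γ := ⟨⟨γ, γ, hγ, hγ⟩, rfl⟩
    have h2 : ¬ IsUnit (γ * a * γ) := by
      intro hu
      apply h
      have key : γ * (γ * a * γ) * γ = a := by
        simp only [mul_assoc]
        rw [hγ, mul_one, show γ * (γ * a) = (γ * γ) * a from (mul_assoc _ _ _).symm, hγ, one_mul]
      rw [← key]
      exact (hγu.mul hu).mul hγu
    rw [Ring.inverse_non_unit _ h, Ring.inverse_non_unit _ h2, mul_zero, zero_mul]

/-- For the coined walk `W = SC` on `ℓ²(ℤ) ⊗ ℂ^{2d}`, with `S` the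
conditional shift and `C` any cell-wise unitary coin, the Schur function of each cell
`H_x` is odd: `f(-z) = -f(z)` on the unit disk; equivalently, all even-order
coefficients `P_x (W* P_x^⊥)ⁿ W* P_x` of its power expansion vanish. -/
theorem statement18
    (e : ℤ × Bool × Fin d → H) (he : Orthonormal ℂ e)
    (hspan : (Submodule.span ℂ (Set.range e)).topologicalClosure = ⊤)
    (S C : H →L[ℂ] H)
    (hS_up : ∀ x r, S (e (x, true, r)) = e (x + 1, true, r))
    (hS_dn : ∀ x r, S (e (x, false, r)) = e (x - 1, false, r))
    (hCunit : C ∈ unitary (H →L[ℂ] H))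
    (hCcell : ∀ x : ℤ, ∀ v ∈ cell e x, C v ∈ cell e x)
    (x : ℤ) (P : H →L[ℂ] H)
    (hP : ∀ v : H, P v ∈ cell e x ∧ v - P v ∈ (cell e x)ᗮ) :
    (∀ z : ℂ, ‖z‖ < 1 → schurP (S ∘L C) P (-z) = -schurP (S ∘L C) P z) ∧
    (∀ n : ℕ, Even n →
      P ∘L ((star (S ∘L C) ∘L (1 - P)) ^ n) ∘L star (S ∘L C) ∘L P = 0) := by
  classical
  set W : H →L[ℂ] H := S ∘L C with hWdef
  have hm1 : (-1 : ℂ) ≠ 0 := by norm_num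
  -- the grading subspace: closure of the span of basis vectors in even cells
  set E : Submodule ℂ H :=
    (Submodule.span ℂ (e '' {p : ℤ × Bool × Fin d | Even p.1})).topologicalClosure with hEdef
  haveI : CompleteSpace E :=
    (Submodule.span ℂ (e '' {p : ℤ × Bool × Fin d | Even p.1})).isClosed_topologicalClosure.completeSpace_coe
  -- the grading operator Γ
  set Γ : H →L[ℂ] H := ((E.reflection).toLinearIsometry).toContinuousLinearMap with hΓdef
  have hΓapp : ∀ v : H, Γ v = E.reflection v := fun v => rfl
  -- action of Γ on basis vectors
  have hΓe : ∀ p : ℤ × Bool × Fin d, Γ (e p) = ((-1 : ℂ) ^ p.1) • e p := by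
    intro p
    rcases Int.even_or_odd p.1 with hpar | hpar
    · have hmem : e p ∈ E := by
        refine (Submodule.span ℂ _).le_topologicalClosure ?_
        exact Submodule.subset_span ⟨p, hpar, rfl⟩
      rw [hΓapp, Submodule.reflection_mem_subspace_eq_self hmem, hpar.neg_one_zpow, one_smul]
    · have hmem : e p ∈ Eᗮ := by
        have hle : E ≤ (ℂ ∙ e p)ᗮ := by
          refine Submodule.topologicalClosure_minimal _ ?_ (Submodule.isClosed_orthogonal _)
          rw [Submodule.span_le]
          rintro _ ⟨q, hq, rfl⟩
          rw [SetLike.mem_coe, Submodule.mem_orthogonal_singleton_iff_inner_right]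
          have hne : p ≠ q := by
            rintro rfl
            exact (Int.not_odd_iff_even.mpr hq) hpar
          exact he.2 hne
        rw [Submodule.mem_orthogonal']
        intro u hu
        exact Submodule.mem_orthogonal_singleton_iff_inner_right.mp (hle hu)
      rw [hΓapp, Submodule.reflection_mem_subspace_orthogonalComplement_eq_neg hmem,
        hpar.neg_one_zpow, neg_one_smul]
  -- basic algebraic properties of Γ
  have hΓ2 : Γ * Γ = 1 := by
    ext v
    simp only [ContinuousLinearMap.mul_apply, ContinuousLinearMap.one_apply, hΓapp]
    exact E.reflection_reflection v
  -- Γ is self-adjoint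
  have hΓstar : star Γ = Γ := by
    have hQ : Γ = (2 : ℕ) • E.starProjection - 1 := by
      ext v
      simp only [ContinuousLinearMap.sub_apply, ContinuousLinearMap.smul_apply,
        ContinuousLinearMap.one_apply, ContinuousLinearMap.comp_apply,
        Submodule.subtypeL_apply, hΓapp, Submodule.reflection_apply]
    rw [hQ, star_sub, star_one, star_nsmul, (isSelfAdjoint_starProjection E).star_eq]
  -- density and extension
  have hdense : Dense ((Submodule.span ℂ (Set.range e) : Submodule ℂ H) : Set H) :=
    Submodule.dense_iff_topologicalClosure_eq_top.mpr hspan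
  have hext : ∀ A B : H →L[ℂ] H, (∀ p, A (e p) = B (e p)) → A = B := by
    intro A B h
    refine ContinuousLinearMap.ext_on hdense ?_
    rintro _ ⟨p, rfl⟩
    exact h p
  -- Γ acts as the scalar (-1)^y on the cell y
  have hcell_scal : ∀ (y : ℤ) (v : H), v ∈ cell e y → Γ v = ((-1 : ℂ) ^ y) • v := by
    intro y v hv
    induction hv using Submodule.span_induction with
    | mem w hw =>
      obtain ⟨q, hq, rfl⟩ := hw
      rw [hΓe q, hq]
    | zero => simp
    | add a b _ _ ha hb => rw [map_add, ha, hb, smul_add]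
    | smul c a _ ha => rw [Γ.map_smul, ha, smul_comm]
  have hc : ((-1 : ℂ) ^ x) * ((-1 : ℂ) ^ x) = 1 := by
    rw [← zpow_add₀ hm1]
    exact Even.neg_one_zpow ⟨x, rfl⟩
  have hcne : ((-1 : ℂ) ^ x) ≠ 0 := zpow_ne_zero _ hm1
  -- Γ essentially commutes with P
  have hΓP : Γ * P = ((-1 : ℂ) ^ x) • P := by
    ext v
    simp only [ContinuousLinearMap.mul_apply, ContinuousLinearMap.smul_apply]
    exact hcell_scal x _ (hP v).1
  -- P is self-adjoint
  have hPstar : star P = P := by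
    have h0 : ∀ u v : H, (inner ℂ ((P u : H)) (v - P v) : ℂ) = 0 := fun u v =>
      (Submodule.mem_orthogonal _ _).mp (hP v).2 _ (hP u).1
    have hinner : ∀ v w : H, (inner ℂ (P v) (w) : ℂ) = (inner ℂ (v) (P w) : ℂ) := by
      intro v w
      have h1 : (inner ℂ (P v) (w) : ℂ) = (inner ℂ (P v) (P w) : ℂ) := by
        conv_lhs => rw [show w = P w + (w - P w) by abel]
        rw [inner_add_right, h0, add_zero]
      have h2 : (inner ℂ (v) (P w) : ℂ) = (inner ℂ (P v) (P w) : ℂ) := by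
        conv_lhs => rw [show v = P v + (v - P v) by abel]
        rw [inner_add_left, inner_eq_zero_symm.mp (h0 w v), add_zero]
      rw [h1, h2]
    have : P = ContinuousLinearMap.adjoint P :=
      (ContinuousLinearMap.eq_adjoint_iff P P).mpr hinner
    rw [ContinuousLinearMap.star_eq_adjoint, ← this]
  have hstarc : star ((-1 : ℂ) ^ x) = (-1 : ℂ) ^ x := by
    rw [show star ((-1 : ℂ) ^ x) = (starRingEnd ℂ) ((-1 : ℂ) ^ x) from rfl,
      map_zpow₀]
    norm_num
  have hPΓ : P * Γ = ((-1 : ℂ) ^ x) • P := by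
    have h := congrArg star hΓP
    rw [StarMul.star_mul, hΓstar, hPstar, star_smul, hstarc, hPstar] at h
    exact h
  have hcommP : Γ * P = P * Γ := by rw [hΓP, hPΓ]
  -- Γ anticommutes with W
  have hΓW : Γ * W = -(W * Γ) := by
    have hSc : ∀ (y : ℤ) (v : H), v ∈ cell e y →
        Γ (S v) = ((-1 : ℂ) ^ (y + 1)) • S v := by
      intro y v hv
      induction hv using Submodule.span_induction with
      | mem w hw =>
        obtain ⟨q, hq, rfl⟩ := hw
        obtain ⟨qx, qb, qr⟩ := q
        simp only [Set.mem_setOf_eq] at hq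
        subst hq
        cases qb with
        | true => rw [hS_up, hΓe]
        | false =>
          rw [hS_dn, hΓe]
          have : ((-1 : ℂ) ^ (qx - 1)) = (-1 : ℂ) ^ (qx + 1) := by
            rw [show qx + 1 = (qx - 1) + 2 by ring, zpow_add₀ hm1]
            norm_num
          rw [this]
      | zero => simp
      | add a b _ _ ha hb => rw [S.map_add, Γ.map_add, ha, hb, smul_add]
      | smul c a _ ha => rw [S.map_smul, Γ.map_smul, ha, smul_comm]
    apply hext
    intro p
    have hCe : C (e p) ∈ cell e p.1 :=
      hCcell p.1 _ (Submodule.subset_span ⟨p, rfl, rfl⟩)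
    have hL : (Γ * W) (e p) = ((-1 : ℂ) ^ (p.1 + 1)) • S (C (e p)) := by
      have : (Γ * W) (e p) = Γ (S (C (e p))) := rfl
      rw [this, hSc p.1 _ hCe]
    have hR : (-(W * Γ)) (e p) = -(((-1 : ℂ) ^ p.1) • S (C (e p))) := by
      have h1 : (-(W * Γ)) (e p) = -(W (Γ (e p))) := rfl
      rw [h1, hΓe, W.map_smul]
      rfl
    rw [hL, hR, zpow_add_one₀ hm1, mul_neg_one, neg_smul]
  -- consequences by taking adjoints
  have hΓWs : Γ * star W = -(star W * Γ) := by
    have h := congrArg star hΓW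
    rw [StarMul.star_mul, star_neg, StarMul.star_mul, hΓstar] at h
    rw [h, neg_neg]
  have hΓ1P : Γ * (1 - P) = (1 - P) * Γ := by
    rw [mul_sub, sub_mul, mul_one, one_mul, hΓP, hPΓ]
  constructor
  · -- Part 1: the Schur function is odd
    intro z _
    have h2 : Γ * W * Γ = -W := by rw [hΓW, neg_mul, mul_assoc, hΓ2, mul_one]
    have h3 : Γ * (1 - P) * Γ = 1 - P := by rw [hΓ1P, mul_assoc, hΓ2, mul_one]
    have hA : Γ * (W - z • (1 - P)) * Γ = -(W - (-z) • (1 - P)) := by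
      have h1 : Γ * (W - z • (1 - P)) * Γ = Γ * W * Γ - z • (Γ * (1 - P) * Γ) := by
        rw [mul_sub, sub_mul]
        congr 1
        rw [mul_smul_comm, smul_mul_assoc]
      rw [h1, h2, h3, neg_smul, sub_neg_eq_add, neg_add, sub_eq_add_neg]
    have hB : W - (-z) • (1 - P) = -(Γ * (W - z • (1 - P)) * Γ) := by
      rw [hA, neg_neg]
    show P ∘L Ring.inverse (W - (-z) • (1 - P)) ∘L P =
      -(P ∘L Ring.inverse (W - z • (1 - P)) ∘L P)
    rw [hB, ring_inverse_neg', ring_inverse_conj _ _ hΓ2]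
    show P * (-(Γ * Ring.inverse (W - z • (1 - P)) * Γ) * P) =
      -(P * (Ring.inverse (W - z • (1 - P)) * P))
    simp only [neg_mul, mul_neg, ← mul_assoc]
    rw [hPΓ, smul_mul_assoc, smul_mul_assoc, smul_mul_assoc,
      mul_assoc _ Γ P, hΓP, mul_smul_comm, smul_smul, hc, one_smul]
  · -- Part 2: even coefficients vanish
    intro n hn
    have hn1 : ((-1 : ℂ)) ^ n = 1 := Even.neg_one_pow hn
    show P * ((star W * (1 - P)) ^ n * (star W * P)) = 0
    set K : H →L[ℂ] H := star W * (1 - P) with hKdef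
    have hΓK : Γ * K = -(K * Γ) := by
      rw [hKdef, ← mul_assoc, hΓWs, neg_mul, mul_assoc, hΓ1P, ← mul_assoc]
    have hΓKn : ∀ m : ℕ, Γ * K ^ m = ((-1 : ℂ) ^ m) • (K ^ m * Γ) := by
      intro m
      induction m with
      | zero => simp
      | succ m ih =>
        rw [pow_succ, ← mul_assoc, ih, smul_mul_assoc, mul_assoc, hΓK, mul_neg,
          pow_succ, mul_neg_one, neg_smul, smul_neg, mul_assoc]
        simp only [hKdef, mul_assoc]
    have hΓKn' : Γ * K ^ n = K ^ n * Γ := by rw [hΓKn n, hn1, one_smul]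
    set X : H →L[ℂ] H := P * K ^ n * star W * P with hXdef
    have hgoal : P * (K ^ n * (star W * P)) = X := by
      rw [hXdef]
      simp only [mul_assoc]
    rw [hgoal]
    have hXr : X * Γ = ((-1 : ℂ) ^ x) • X := by
      rw [hXdef, mul_assoc, hPΓ, mul_smul_comm]
    have hXl : Γ * X = ((-1 : ℂ) ^ x) • X := by
      rw [hXdef]
      simp only [← mul_assoc]
      rw [hΓP, smul_mul_assoc, smul_mul_assoc, smul_mul_assoc]
    have hmain : Γ * X = -(X * Γ) := by
      rw [hXdef]
      calc Γ * (P * K ^ n * star W * P)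
          = (Γ * P) * (K ^ n * (star W * P)) := by simp only [mul_assoc]
        _ = (P * Γ) * (K ^ n * (star W * P)) := by rw [hcommP]
        _ = P * ((Γ * K ^ n) * (star W * P)) := by simp only [mul_assoc]
        _ = P * ((K ^ n * Γ) * (star W * P)) := by rw [hΓKn']
        _ = (P * K ^ n) * ((Γ * star W) * P) := by simp only [mul_assoc]
        _ = (P * K ^ n) * (-(star W * Γ) * P) := by rw [hΓWs]
        _ = -((P * K ^ n) * (star W * (Γ * P))) := by
            simp only [neg_mul, mul_neg, mul_assoc]
        _ = -((P * K ^ n) * (star W * (P * Γ))) := by rw [hcommP]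
        _ = -(P * K ^ n * star W * P * Γ) := by simp only [mul_assoc]
    rw [hXl, hXr] at hmain
    have h2 : ((-1 : ℂ) ^ x) • X + ((-1 : ℂ) ^ x) • X = 0 :=
      eq_neg_iff_add_eq_zero.mp hmain
    rw [← two_smul ℂ, smul_smul] at h2
    rcases smul_eq_zero.mp h2 with h | h
    · exact absurd h (mul_ne_zero two_ne_zero hcne)
    · exact h
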